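/- arXiv:2306.03409 — 2 statements merged into one kernel-verified Lean document; each statement's English description precedes it below -/
import Mathlib

section
/- Let M be a matroid on ground set E with two weight functions w₁, w₂ : E → R, and for λ ∈ [0,1] let w^{(λ)} = (1−λ)w₁ + λw₂. Suppose λ₀ ∈ (0,1) is such that for all i, j ∈ E with (w₁(i), w₂(i)) ≠ (w₁(j), w₂(j)) we have w^{(λ₀)}(i) ≠ w^{(λ₀)}(j). Then any two bases x, y of M minimizing w^{(λ₀)} satisfy w₁(x) = w₁(y) and w₂(x) = w₂(y). -/
/-!
Let `S` be a set in which every element is strictly lighter than every element outside it.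
A minimum-weight base `B` meets `S` in at least as many elements as any other base `B'`:
otherwise augmenting `B ∩ S` from a larger `B' ∩ S` gives `a ∈ S \ B`, and the fundamental
circuit of `a` in `B` leaves `insert a (B ∩ S)` through some `f ∈ B \ S`; the base
`insert a (B \ {f})` is then strictly lighter than `B`. Taking `S = w⁻¹' Iic v` and
`S = w⁻¹' Iio v`, any two minimum-weight bases have the same number of elements of each weight
`v`. When `w = (1 - λ) w₁ + λ w₂` separates distinct weight vectors, `w₁` and `w₂` factor
through `w`, so their sums over the two bases agree.
-/

open Set

section Fibers

variable {α β : Type*}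

lemma Set.Finite.ncard_inter_preimage_singleton [DecidableEq β] {s : Set α} (hs : s.Finite)
    (w : α → β) (v : β) : (s ∩ w ⁻¹' {v}).ncard = Multiset.count v (hs.toFinset.val.map w) := by
  rw [Multiset.count_map, ncard_eq_toFinset_card _ (hs.inter_of_left _), ← Finset.filter_val,
    Finset.card_val]
  congr 1
  ext e
  simp [eq_comm]

lemma Set.Finite.finsum_mem_eq_of_ncard_inter_preimage_eq {M : Type*} [AddCommMonoid M]
    {s t : Set α} (hs : s.Finite) (ht : t.Finite) {w : α → β} {k : α → M}
    (hk : k.FactorsThrough w) (h : ∀ v, (s ∩ w ⁻¹' {v}).ncard = (t ∩ w ⁻¹' {v}).ncard) :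
    ∑ᶠ e ∈ s, k e = ∑ᶠ e ∈ t, k e := by
  classical
  have hmap : hs.toFinset.val.map w = ht.toFinset.val.map w := by
    ext v
    rw [← hs.ncard_inter_preimage_singleton, ← ht.ncard_inter_preimage_singleton, h]
  have hk_comp : k = Function.extend w k 0 ∘ w := funext fun e ↦ (hk.extend_apply 0 e).symm
  rw [finsum_mem_eq_finite_toFinset_sum _ hs, finsum_mem_eq_finite_toFinset_sum _ ht, hk_comp,
    Finset.sum_eq_multiset_sum, Finset.sum_eq_multiset_sum, ← Multiset.map_map, hmap,
    Multiset.map_map]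

lemma Set.Finite.ncard_inter_preimage_Iic [PartialOrder β] {s : Set α} (hs : s.Finite)
    (w : α → β) (v : β) :
    (s ∩ w ⁻¹' Iic v).ncard = (s ∩ w ⁻¹' Iio v).ncard + (s ∩ w ⁻¹' {v}).ncard := by
  rw [← ncard_union_eq _ (hs.inter_of_left _) (hs.inter_of_left _), ← inter_union_distrib_left,
    ← preimage_union, Iio_union_right]
  have hdisj : Disjoint (Iio v) {v} := disjoint_singleton_right.2 (lt_irrefl v)
  exact (hdisj.preimage w).inter_left' s |>.inter_right' s

end Fibers

namespace Matroid

variable {α : Type*} {M : Matroid α} {B B' I S : Set α} {a : α}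

lemma IsBase.exists_mem_sdiff_isBase_insert_sdiff (hB : M.IsBase B) (haB : a ∉ B)
    (hI : M.Indep (insert a I)) : ∃ f ∈ B \ I, M.IsBase (insert a (B \ {f})) := by
  have haE : a ∈ M.E := hI.subset_ground (mem_insert a I)
  obtain ⟨f, hfC, hfI⟩ := not_subset.1 fun h : M.fundCircuit a B ⊆ insert a I ↦
    (hB.fundCircuit_isCircuit haE haB).not_indep (hI.subset h)
  have haf : a ≠ f := by
    rintro rfl
    exact hfI (mem_insert a I)
  have hfB : f ∈ B := (M.fundCircuit_subset_insert a B hfC).resolve_left haf.symm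
  refine ⟨f, ⟨hfB, fun h ↦ hfI (mem_insert_of_mem a h)⟩, hB.exchange_isBase_of_indep haB ?_⟩
  rw [insert_sdiff_singleton_comm haf]
  exact (hB.indep.mem_fundCircuit_iff (by rwa [hB.closure_eq]) haB).1 hfC

def IsMinWeightBase {γ : Type*} [AddCommMonoid γ] [Preorder γ] (M : Matroid α) (w : α → γ)
    (B : Set α) : Prop :=
  M.IsBase B ∧ ∀ B', M.IsBase B' → ∑ᶠ e ∈ B, w e ≤ ∑ᶠ e ∈ B', w e

variable {γ : Type*} [AddCommMonoid γ] [LinearOrder γ] [IsOrderedCancelAddMonoid γ] {w : α → γ}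
  [M.RankFinite]

lemma IsMinWeightBase.ncard_inter_le (hB : M.IsMinWeightBase w B) (hB' : M.IsBase B')
    (hS : ∀ a ∈ S, ∀ f ∉ S, w a < w f) : (B' ∩ S).ncard ≤ (B ∩ S).ncard := by
  by_contra! hlt
  have hcard : (B ∩ S).encard < (B' ∩ S).encard := by
    rw [← (hB.1.finite.inter_of_left S).cast_ncard_eq,
      ← (hB'.finite.inter_of_left S).cast_ncard_eq]
    exact_mod_cast hlt
  obtain ⟨a, ⟨⟨-, haS⟩, haBS⟩, ha⟩ :=
    (hB.1.indep.inter_right S).augment (hB'.indep.inter_right S) hcard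
  have haB : a ∉ B := fun h ↦ haBS ⟨h, haS⟩
  obtain ⟨f, ⟨hfB, hfBS⟩, hbase⟩ := hB.1.exists_mem_sdiff_isBase_insert_sdiff haB ha
  have hfS : f ∉ S := fun h ↦ hfBS ⟨hfB, h⟩
  have hfin : (B \ {f}).Finite := hB.1.finite.sdiff
  have hB_sum : ∑ᶠ e ∈ B, w e = w f + ∑ᶠ e ∈ B \ {f}, w e := by
    rw [← finsum_mem_insert w (fun h ↦ h.2 rfl) hfin, insert_sdiff_self_of_mem hfB]
  have hle := hB.2 _ hbase
  rw [finsum_mem_insert w (fun h ↦ haB h.1) hfin, hB_sum] at hle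
  exact (hS a haS f hfS).not_ge (le_of_add_le_add_right hle)

lemma IsMinWeightBase.ncard_inter_eq (hB : M.IsMinWeightBase w B)
    (hB' : M.IsMinWeightBase w B') (hS : ∀ a ∈ S, ∀ f ∉ S, w a < w f) :
    (B ∩ S).ncard = (B' ∩ S).ncard :=
  (hB'.ncard_inter_le hB.1 hS).antisymm (hB.ncard_inter_le hB'.1 hS)

lemma IsMinWeightBase.ncard_inter_preimage_singleton_eq (hB : M.IsMinWeightBase w B)
    (hB' : M.IsMinWeightBase w B') (v : γ) :
    (B ∩ w ⁻¹' {v}).ncard = (B' ∩ w ⁻¹' {v}).ncard := by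
  have hIic := hB.ncard_inter_eq hB' (S := w ⁻¹' Iic v) fun a ha f hf ↦
    lt_of_le_of_lt ha (not_le.1 hf)
  have hIio := hB.ncard_inter_eq hB' (S := w ⁻¹' Iio v) fun a ha f hf ↦
    lt_of_lt_of_le ha (not_lt.1 hf)
  rw [hB.1.finite.ncard_inter_preimage_Iic, hB'.1.finite.ncard_inter_preimage_Iic] at hIic
  omega

lemma IsMinWeightBase.finsum_mem_eq_of_factorsThrough {M' : Type*} [AddCommMonoid M']
    {k : α → M'} (hB : M.IsMinWeightBase w B) (hB' : M.IsMinWeightBase w B')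
    (hk : k.FactorsThrough w) : ∑ᶠ e ∈ B, k e = ∑ᶠ e ∈ B', k e :=
  hB.1.finite.finsum_mem_eq_of_ncard_inter_preimage_eq hB'.1.finite hk
    (hB.ncard_inter_preimage_singleton_eq hB')

end Matroid

theorem scalarized_optima_share_image_general
    {α : Type*} [Fintype α] (M : Matroid α) (w₁ w₂ : α → ℝ)
    (lam : ℝ)
    (hsep : ∀ i j : α, (w₁ i, w₂ i) ≠ (w₁ j, w₂ j) →
      (1 - lam) * w₁ i + lam * w₂ i ≠ (1 - lam) * w₁ j + lam * w₂ j)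
    (x y : Set α) (hx : M.IsBase x) (hy : M.IsBase y)
    (hxmin : ∀ b : Set α, M.IsBase b →
      (∑ᶠ e ∈ x, ((1 - lam) * w₁ e + lam * w₂ e)) ≤ ∑ᶠ e ∈ b, ((1 - lam) * w₁ e + lam * w₂ e))
    (hymin : ∀ b : Set α, M.IsBase b →
      (∑ᶠ e ∈ y, ((1 - lam) * w₁ e + lam * w₂ e)) ≤ ∑ᶠ e ∈ b, ((1 - lam) * w₁ e + lam * w₂ e)) :
    (∑ᶠ e ∈ x, w₁ e) = (∑ᶠ e ∈ y, w₁ e) ∧ (∑ᶠ e ∈ x, w₂ e) = (∑ᶠ e ∈ y, w₂ e) := by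
  set w : α → ℝ := fun e ↦ (1 - lam) * w₁ e + lam * w₂ e
  have hx' : M.IsMinWeightBase w x := ⟨hx, hxmin⟩
  have hy' : M.IsMinWeightBase w y := ⟨hy, hymin⟩
  have hfactor : (fun e ↦ (w₁ e, w₂ e)).FactorsThrough w := fun i j hij ↦
    not_not.1 fun hne ↦ hsep i j hne hij
  exact ⟨hx'.finsum_mem_eq_of_factorsThrough hy' fun i j hij ↦ congr_arg Prod.fst (hfactor hij),
    hx'.finsum_mem_eq_of_factorsThrough hy' fun i j hij ↦ congr_arg Prod.snd (hfactor hij)⟩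

/-- if at trade-off `λ₀ ∈ (0,1)` any two elements with distinct weight
vectors have distinct scalarized weights, then all bases minimizing the scalarized weight
`w^{(λ₀)} = (1−λ₀)w₁ + λ₀w₂` share the same image `(w₁(·), w₂(·))`. -/
theorem scalarized_optima_share_image
    {α : Type*} [Fintype α] (M : Matroid α) (w₁ w₂ : α → ℝ)
    (lam : ℝ) (hlam : lam ∈ Set.Ioo (0:ℝ) 1)
    (hsep : ∀ i j : α, (w₁ i, w₂ i) ≠ (w₁ j, w₂ j) →
      (1 - lam) * w₁ i + lam * w₂ i ≠ (1 - lam) * w₁ j + lam * w₂ j)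
    (x y : Set α) (hx : M.IsBase x) (hy : M.IsBase y)
    (hxmin : ∀ b : Set α, M.IsBase b →
      (∑ᶠ e ∈ x, ((1 - lam) * w₁ e + lam * w₂ e)) ≤ ∑ᶠ e ∈ b, ((1 - lam) * w₁ e + lam * w₂ e))
    (hymin : ∀ b : Set α, M.IsBase b →
      (∑ᶠ e ∈ y, ((1 - lam) * w₁ e + lam * w₂ e)) ≤ ∑ᶠ e ∈ b, ((1 - lam) * w₁ e + lam * w₂ e)) :
    (∑ᶠ e ∈ x, w₁ e) = (∑ᶠ e ∈ y, w₁ e) ∧ (∑ᶠ e ∈ x, w₂ e) = (∑ᶠ e ∈ y, w₂ e) :=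
  scalarized_optima_share_image_general M w₁ w₂ lam hsep x y hx hy hxmin hymin
end

section
/- Let M be a matroid with bi-objective integer weights and suppose distinct supported bases have distinct images under w = (w₁, w₂). Then the set of supported bases is 2-Hamming connected: for any two supported bases x, y there exists a sequence x = z₁, z₂, ..., z_h = y of supported bases with |z_i Δ z_{i+1}| = 2 for all i. -/
/-!
For a fixed `λ`, the bases of minimum weight `(1 - λ) w₁ + λ w₂` are linked by single exchanges
through minimum bases: if `B ≠ B'` are both minimum, exchanging an element of `B \ B'` of maximal
weight against `B'` is weight-neutral, and brings `B'` one step closer to `B`. As `λ` moves, every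
base that is minimum at a nearby `λ'` is already minimum at `λ`, since only finitely many bases
compete. Hence "every minimum base at `λ` is linked to every minimum base at `λ'`" is an
equivalence relation on `[0, 1]` with open classes, and `[0, 1]` is connected.
-/

open Filter Topology Relation

/-- A base is supported if it minimizes the scalarization `(1−λ)w₁ + λw₂` over all bases
for some `λ ∈ [0,1]`. -/
def SupportedBase {α : Type*} (M : Matroid α) (w₁ w₂ : α → ℤ) (x : Set α) : Prop :=
  M.IsBase x ∧ ∃ lam : ℝ, lam ∈ Set.Icc (0:ℝ) 1 ∧
    ∀ y : Set α, M.IsBase y →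
      (∑ᶠ e ∈ x, ((1 - lam) * (w₁ e : ℝ) + lam * (w₂ e : ℝ))) ≤
        ∑ᶠ e ∈ y, ((1 - lam) * (w₁ e : ℝ) + lam * (w₂ e : ℝ))

theorem Relation.ReflTransGen.exists_seq {β : Type*} {r : β → β → Prop} {a b : β}
    (h : ReflTransGen r a b) :
    ∃ (n : ℕ) (z : ℕ → β), z 0 = a ∧ z n = b ∧ ∀ i < n, r (z i) (z (i + 1)) := by
  induction h using Relation.ReflTransGen.head_induction_on with
  | refl => exact ⟨0, fun _ => b, rfl, rfl, fun _ hi => absurd hi (Nat.not_lt_zero _)⟩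
  | @head a c hac _ ih =>
    obtain ⟨n, z, hz0, hzn, hz⟩ := ih
    refine ⟨n + 1, fun | 0 => a | i + 1 => z i, rfl, hzn, ?_⟩
    rintro (_ | i) hi
    · simpa [hz0] using hac
    · exact hz i (by omega)

theorem finsum_mem_insert_sdiff_singleton {α M : Type*} [AddCommGroup M] (f : α → M)
    {s : Set α} {a b : α} (ha : a ∈ s) (hb : b ∉ s) (hs : s.Finite) :
    ∑ᶠ i ∈ insert b (s \ {a}), f i = ∑ᶠ i ∈ s, f i - f a + f b := by
  have hs' : ∑ᶠ i ∈ s, f i = f a + ∑ᶠ i ∈ s \ {a}, f i := by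
    conv_lhs => rw [← Set.insert_eq_of_mem ha, ← Set.insert_sdiff_singleton]
    exact finsum_mem_insert f (fun h => h.2 rfl) hs.sdiff
  rw [finsum_mem_insert f (fun h => hb h.1) hs.sdiff, hs']
  abel

namespace Set

variable {α : Type*} {s : Set α} {a b : α}

theorem ncard_symmDiff_insert_sdiff_singleton (ha : a ∉ s) (hb : b ∈ s) :
    (symmDiff (insert a (s \ {b})) s).ncard = 2 := by
  have hab : a ≠ b := fun h => ha (h ▸ hb)
  have : symmDiff (insert a (s \ {b})) s = {a, b} := by
    ext x
    by_cases hxa : x = a <;> by_cases hxb : x = b <;> simp_all [mem_symmDiff]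
  rw [this, ncard_pair hab]

theorem sdiff_insert_sdiff_singleton {t : Set α} (hb : b ∉ s) :
    s \ insert a (t \ {b}) = (s \ t) \ {a} := by
  ext x
  by_cases hxb : x = b <;> simp_all
  tauto

end Set

def ExchangeAdj {α : Type*} (p : Set α → Prop) (X Y : Set α) : Prop :=
  p X ∧ p Y ∧ (symmDiff X Y).ncard = 2

theorem ExchangeAdj.mono {α : Type*} {p q : Set α → Prop} (hpq : ∀ X, p X → q X)
    {X Y : Set α} (h : ExchangeAdj p X Y) : ExchangeAdj q X Y :=
  ⟨hpq X h.1, hpq Y h.2.1, h.2.2⟩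

namespace Matroid

variable {α : Type*} {M : Matroid α} {c : α → ℝ} {B B' : Set α} {e f : α}

def IsMinBase (M : Matroid α) (c : α → ℝ) (B : Set α) : Prop :=
  M.IsBase B ∧ ∀ B', M.IsBase B' → ∑ᶠ x ∈ B, c x ≤ ∑ᶠ x ∈ B', c x

theorem finite_setOf_isBase (M : Matroid α) [M.Finite] : {B | M.IsBase B}.Finite :=
  M.ground_finite.finite_subsets.subset fun _ hB => hB.subset_ground

theorem exists_isMinBase (M : Matroid α) [M.Finite] (c : α → ℝ) : ∃ B, M.IsMinBase c B :=
  Set.exists_min_image _ _ M.finite_setOf_isBase M.exists_isBase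

theorem IsMinBase.le_of_exchange [M.RankFinite] (hB : M.IsMinBase c B) (he : e ∈ B) (hf : f ∉ B)
    (hB' : M.IsBase (insert f (B \ {e}))) : c e ≤ c f := by
  have := hB.2 _ hB'
  rw [finsum_mem_insert_sdiff_singleton c he hf hB.1.finite] at this
  linarith

theorem IsMinBase.exists_exchange [M.RankFinite] (hB : M.IsMinBase c B)
    (hB' : M.IsMinBase c B') (hne : (B \ B').Nonempty) :
    ∃ e ∈ B \ B', ∃ f ∈ B' \ B, M.IsMinBase c (insert e (B' \ {f})) := by
  -- With `e` of maximal weight in `B \ B'`, the two exchanges squeeze `c e' ≤ c e ≤ c f ≤ c e'`.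
  obtain ⟨e, he, he_max⟩ := Set.exists_max_image _ c hB.1.finite.sdiff hne
  obtain ⟨f, hf, hBef⟩ := hB.1.exchange hB'.1 he
  obtain ⟨e', he', hB'fe'⟩ := hB'.1.exchange hB.1 hf
  have hce' : c e' = c f :=
    le_antisymm ((he_max e' he').trans (hB.le_of_exchange he.1 hf.2 hBef))
      (hB'.le_of_exchange hf.1 he'.2 hB'fe')
  refine ⟨e', he', f, hf, hB'fe', fun X hX => ?_⟩
  rw [finsum_mem_insert_sdiff_singleton c hf.1 he'.2 hB'.1.finite, hce', sub_add_cancel]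
  exact hB'.2 X hX

theorem IsMinBase.reflTransGen [M.RankFinite] (hB : M.IsMinBase c B) (hB' : M.IsMinBase c B') :
    ReflTransGen (ExchangeAdj (M.IsMinBase c)) B B' := by
  obtain ⟨n, hn⟩ : ∃ n, (B \ B').ncard = n := ⟨_, rfl⟩
  induction n generalizing B' with
  | zero =>
    have hsub : B ⊆ B' := Set.sdiff_eq_empty.mp ((Set.ncard_eq_zero hB.1.finite.sdiff).mp hn)
    rw [hB.1.eq_of_subset_isBase hB'.1 hsub]
  | succ n ih =>
    obtain ⟨e, he, f, hf, hB''⟩ :=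
      hB.exists_exchange hB' (Set.nonempty_of_ncard_ne_zero (by omega))
    refine (ih hB'' ?_).tail ⟨hB'', hB', Set.ncard_symmDiff_insert_sdiff_singleton he.2 hf.1⟩
    rw [Set.sdiff_insert_sdiff_singleton hf.2, Set.ncard_sdiff_singleton_of_mem he, hn,
      Nat.add_sub_cancel]

variable {T : Type*} [TopologicalSpace T] {c : T → α → ℝ}

theorem continuous_finsum_mem_of_finite (hc : ∀ x, Continuous (c · x)) {B : Set α}
    (hB : B.Finite) : Continuous fun t => ∑ᶠ x ∈ B, c t x := by
  simp_rw [finsum_mem_eq_finite_toFinset_sum _ hB]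
  exact continuous_finsetSum _ fun x _ => hc x

theorem eventually_isMinBase_imp [M.Finite] (hc : ∀ x, Continuous (c · x)) (t₀ : T) :
    ∀ᶠ t in 𝓝 t₀, ∀ B, M.IsMinBase (c t) B → M.IsMinBase (c t₀) B := by
  obtain ⟨B₀, hB₀⟩ := M.exists_isMinBase (c t₀)
  have hstrict : ∀ B ∈ {B | M.IsBase B}, ∀ᶠ t in 𝓝 t₀,
      ¬ M.IsMinBase (c t₀) B → ∑ᶠ x ∈ B₀, c t x < ∑ᶠ x ∈ B, c t x := by
    intro B (hB : M.IsBase B)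
    by_cases hmin : M.IsMinBase (c t₀) B
    · exact Eventually.of_forall fun _ h => absurd hmin h
    · obtain ⟨B', hB', hlt⟩ : ∃ B', M.IsBase B' ∧ ∑ᶠ x ∈ B', c t₀ x < ∑ᶠ x ∈ B, c t₀ x := by
        simpa [IsMinBase, hB] using hmin
      filter_upwards [(continuous_finsum_mem_of_finite hc hB₀.1.finite).continuousAt.eventually_lt
        (continuous_finsum_mem_of_finite hc hB.finite).continuousAt
        ((hB₀.2 B' hB').trans_lt hlt)] with t ht _ using ht
  filter_upwards [(eventually_all_finite M.finite_setOf_isBase).2 hstrict] with t ht B hB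
  by_contra hmin
  exact (ht B hB.1 hmin).not_ge (hB.2 B₀ hB₀.1)

theorem reflTransGen_isMinBase_of_isPreconnected [M.Finite] (hc : ∀ x, Continuous (c · x))
    {s : Set T} (hs : IsPreconnected s) {t₁ t₂ : T} (ht₁ : t₁ ∈ s) (ht₂ : t₂ ∈ s) {B₁ B₂ : Set α}
    (hB₁ : M.IsMinBase (c t₁) B₁) (hB₂ : M.IsMinBase (c t₂) B₂) :
    ReflTransGen (ExchangeAdj fun X => ∃ t ∈ s, M.IsMinBase (c t) X) B₁ B₂ := by
  let R := ExchangeAdj fun X => ∃ t ∈ s, M.IsMinBase (c t) X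
  let P : T → T → Prop := fun t t' => ∀ B B', M.IsMinBase (c t) B → M.IsMinBase (c t') B' →
    ReflTransGen R B B'
  have hlevel : ∀ t ∈ s, ∀ B B', M.IsMinBase (c t) B → M.IsMinBase (c t) B' →
      ReflTransGen R B B' :=
    fun t ht B B' hB hB' =>
      ReflTransGen.mono (fun _ _ h => h.mono fun X hX => ⟨t, ht, hX⟩) _ _ (hB.reflTransGen hB')
  refine hs.induction₂' P (fun t ht => ?_) (fun t₁ t₂ t₃ _ _ _ h₁₂ h₂₃ B B'' hB hB'' => ?_)
    ht₁ ht₂ B₁ B₂ hB₁ hB₂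
  · filter_upwards [nhdsWithin_le_nhds (eventually_isMinBase_imp (M := M) hc t)] with t' ht'
    exact ⟨fun B B' hB hB' => hlevel t ht B B' hB (ht' B' hB'),
      fun B B' hB hB' => hlevel t ht B B' (ht' B hB) hB'⟩
  · obtain ⟨B', hB'⟩ := M.exists_isMinBase (c t₂)
    exact (h₁₂ B B' hB hB').trans (h₂₃ B' B'' hB' hB'')

end Matroid

theorem supportedBase_iff {α : Type*} {M : Matroid α} {w₁ w₂ : α → ℤ} {B : Set α} :
    SupportedBase M w₁ w₂ B ↔ ∃ t ∈ Set.Icc (0 : ℝ) 1,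
      M.IsMinBase (fun x => (1 - t) * (w₁ x : ℝ) + t * (w₂ x : ℝ)) B :=
  ⟨fun ⟨hB, t, ht, h⟩ => ⟨t, ht, hB, h⟩, fun ⟨t, ht, hB, h⟩ => ⟨hB, t, ht, h⟩⟩

theorem supported_bases_two_hamming_connected_general
    {α : Type*} [Fintype α] (M : Matroid α) (w₁ w₂ : α → ℤ)
    (x y : Set α) (hx : SupportedBase M w₁ w₂ x) (hy : SupportedBase M w₁ w₂ y) :
    ∃ (h : ℕ) (z : ℕ → Set α), z 0 = x ∧ z h = y ∧
      (∀ i ≤ h, SupportedBase M w₁ w₂ (z i)) ∧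
      (∀ i < h, (symmDiff (z i) (z (i + 1))).ncard = 2) := by
  obtain ⟨t₁, ht₁, hx₁⟩ := supportedBase_iff.mp hx
  obtain ⟨t₂, ht₂, hy₂⟩ := supportedBase_iff.mp hy
  have hlink : ReflTransGen (ExchangeAdj (SupportedBase M w₁ w₂)) x y :=
    ReflTransGen.mono (fun _ _ h => h.mono fun _ => supportedBase_iff.mpr) _ _
      (Matroid.reflTransGen_isMinBase_of_isPreconnected
        (c := fun t x => (1 - t) * (w₁ x : ℝ) + t * (w₂ x : ℝ)) (fun _ => by fun_prop)
        isPreconnected_Icc ht₁ ht₂ hx₁ hy₂)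
  obtain ⟨n, z, hz0, hzn, hz⟩ := hlink.exists_seq
  refine ⟨n, z, hz0, hzn, fun i hi => ?_, fun i hi => (hz i hi).2.2⟩
  rcases hi.lt_or_eq with hi | rfl
  · exact (hz i hi).1
  · exact hzn ▸ hy

/-- if distinct supported bases have distinct images under `(w₁, w₂)`, then
the set of supported bases is 2-Hamming connected: any two supported bases are linked by
a sequence of supported bases in which consecutive ones have symmetric difference of
size exactly 2. -/
theorem supported_bases_two_hamming_connected
    {α : Type*} [Fintype α] (M : Matroid α) (w₁ w₂ : α → ℤ)
    (hdistinct : ∀ x y : Set α, SupportedBase M w₁ w₂ x → SupportedBase M w₁ w₂ y →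
      x ≠ y → ((∑ᶠ e ∈ x, w₁ e), (∑ᶠ e ∈ x, w₂ e)) ≠ ((∑ᶠ e ∈ y, w₁ e), (∑ᶠ e ∈ y, w₂ e)))
    (x y : Set α) (hx : SupportedBase M w₁ w₂ x) (hy : SupportedBase M w₁ w₂ y) :
    ∃ (h : ℕ) (z : ℕ → Set α), z 0 = x ∧ z h = y ∧
      (∀ i ≤ h, SupportedBase M w₁ w₂ (z i)) ∧
      (∀ i < h, (symmDiff (z i) (z (i + 1))).ncard = 2) :=
  supported_bases_two_hamming_connected_general M w₁ w₂ x y hx hy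
end
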